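/- Let n be a nonempty finite type, σ : Matrix n n ℂ positive definite of trace 1, L : Matrix n n ℂ →ₗ[ℂ] Matrix n n ℂ a linear map, and for t ≥ 0 let P_t := exp(t • L) be the exponential of the endomorphism t • L. Let E : Matrix n n ℂ →ₗ[ℂ] Matrix n n ℂ satisfy E ∘ E = E and ⟨E X, Y⟩_σ = ⟨X, E Y⟩_σ for all X, Y. Assume: (a) L(X*) = (L X)* for all X; (b) L ∘ E = E ∘ L; (c) for all t ≥ 0 and all X, ‖P_t(E X)‖_σ = ‖E X‖_σ; (d) (Poincaré inequality) there is λ > 0 with λ · ‖X − E X‖_σ² ≤ −Re⟨X, L X⟩_σ for every Hermitian X. Then for every Hermitian X and every t ≥ 0: ‖P_t X − E(P_t X)‖_σ² ≤ exp(−2 λ t) · ‖X − E X‖_σ². -/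

import Mathlib

open Matrix
open scoped ComplexOrder

attribute [local instance] Matrix.frobeniusNormedAddCommGroup Matrix.frobeniusNormedSpace

/-- matrix square root via the continuous functional calculus -/
noncomputable def msqrt {n : Type*} [Fintype n] [DecidableEq n] (A : Matrix n n ℂ) :
    Matrix n n ℂ := cfc Real.sqrt A

/-- the KMS inner product associated with a (positive definite) matrix `σ`:
`⟨X, Y⟩_σ = Tr[σ^{1/2} X* σ^{1/2} Y]`. -/
noncomputable def kmsInner {n : Type*} [Fintype n] [DecidableEq n]
    (σ X Y : Matrix n n ℂ) : ℂ :=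
  Matrix.trace (msqrt σ * Xᴴ * msqrt σ * Y)

/-- the squared KMS norm `‖X‖_σ² = Re ⟨X, X⟩_σ` -/
noncomputable def kmsNormSq {n : Type*} [Fintype n] [DecidableEq n]
    (σ X : Matrix n n ℂ) : ℝ := (kmsInner σ X X).re

/-- the KMS norm `‖X‖_σ` -/
noncomputable def kmsNorm {n : Type*} [Fintype n] [DecidableEq n]
    (σ X : Matrix n n ℂ) : ℝ := Real.sqrt (kmsNormSq σ X)

/-- helper instance (port): instance search no longer finds the topological-ring structure of
the operator algebra under the local Frobenius norm instances. -/
instance matrixCLMIsTopologicalRing {n : Type*} [Fintype n] [DecidableEq n] :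
    IsTopologicalRing (Matrix n n ℂ →L[ℂ] Matrix n n ℂ) :=
  @NonUnitalSeminormedRing.toIsTopologicalRing _
    (@SeminormedRing.toNonUnitalSeminormedRing _ (@NormedRing.toSeminormedRing _
      (ContinuousLinearMap.toNormedRing (𝕜 := ℂ) (E := Matrix n n ℂ))))

/-!
Along the flow `Z s = P s X`, the variance `f s = ‖Z s - E (Z s)‖²_σ` has derivative
`2 Re⟨Z - E Z, L Z - E (L Z)⟩_σ = 2 Re⟨Z, L Z⟩_σ - 2 Re⟨E Z, L (E Z)⟩_σ`, because `E` is a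
KMS-self-adjoint projection commuting with `L`. The second term vanishes since `P s` is isometric
on the range of `E` and `E (Z s) = P s (E X)`. Since `L` commutes with the adjoint, `Z s` stays
Hermitian, so the Poincaré inequality gives `f' ≤ -2λ f`, and Grönwall's inequality concludes.
-/

attribute [local instance] Matrix.frobeniusNormedRing Matrix.frobeniusNormedAlgebra
  Matrix.frobenius_normedStarGroup

open NormedSpace Set

section OperatorExp

variable {V : Type*} [NormedAddCommGroup V] [NormedSpace ℂ V]

theorem hasDerivAt_exp_smul_apply [CompleteSpace V] (T : V →L[ℂ] V) (x : V) (t : ℝ) :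
    HasDerivAt (fun s : ℝ => exp (s • T) x) (T (exp (t • T) x)) t :=
  ((ContinuousLinearMap.apply ℂ V x).restrictScalars ℝ).hasFDerivAt.comp_hasDerivAt t
    (hasDerivAt_exp_smul_const' T t)

theorem Commute.apply_exp_smul_apply {S T : V →L[ℂ] V} (h : Commute S T) (t : ℝ) (x : V) :
    S (NormedSpace.exp (t • T) x) = NormedSpace.exp (t • T) (S x) :=
  congr($(((h.smul_right t).exp_right).eq) x)

variable [StarAddMonoid V] [StarModule ℂ V] [NormedStarGroup V]

noncomputable def starConj : (V →L[ℂ] V) →+* (V →L[ℂ] V) where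
  toFun f := (starL ℂ : V ≃L⋆[ℂ] V).toContinuousLinearMap.comp
    (f.comp (starL ℂ : V ≃L⋆[ℂ] V).toContinuousLinearMap)
  map_one' := by ext; simp
  map_mul' f g := by ext; simp
  map_zero' := by ext; simp
  map_add' f g := by ext; simp

@[simp] theorem starConj_apply (f : V →L[ℂ] V) (x : V) : starConj f x = star (f (star x)) := rfl

theorem continuous_starConj : Continuous (starConj (V := V)) :=
  AddMonoidHomClass.continuous_of_bound starConj 1 fun f => by
    rw [one_mul]
    refine ContinuousLinearMap.opNorm_le_bound _ (norm_nonneg f) fun x => ?_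
    simpa [norm_star] using f.le_opNorm (star x)

theorem star_exp_smul_apply [CompleteSpace V] {T : V →L[ℂ] V}
    (hT : ∀ x, T (star x) = star (T x)) (t : ℝ) (x : V) :
    star (exp (t • T) x) = exp (t • T) (star x) := by
  have hfix : starConj (t • T) = t • T := by
    ext y
    simp [hT]
  have := congr($(map_exp_of_mem_ball (𝕂 := ℂ) starConj continuous_starConj (t • T)
    ((expSeries_radius_eq_top ℂ (V →L[ℂ] V)).symm ▸ edist_lt_top _ _)) (star x))
  simpa [hfix] using this

end OperatorExp

theorem le_mul_exp_of_deriv_right_le_mul {f f' : ℝ → ℝ} {K a b : ℝ}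
    (hf : ContinuousOn f (Icc a b)) (hf' : ∀ x ∈ Ico a b, HasDerivWithinAt f (f' x) (Ici x) x)
    (bound : ∀ x ∈ Ico a b, f' x ≤ K * f x) (hab : a ≤ b) :
    f b ≤ f a * Real.exp (K * (b - a)) := by
  have := le_gronwallBound_of_liminf_deriv_right_le (ε := 0) hf
    (fun x hx _ hr => (hf' x hx).liminf_right_slope_le hr) le_rfl
    (by simpa only [add_zero] using bound) b ⟨hab, le_rfl⟩
  rwa [gronwallBound_ε0] at this

section KMS

variable {n : Type*} [Fintype n] [DecidableEq n]

-- `cfc` is `0` off self-adjoint matrices, so this holds for every `σ`.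
open scoped MatrixOrder in
theorem msqrt_nonneg (σ : Matrix n n ℂ) : 0 ≤ msqrt σ :=
  cfc_nonneg fun x _ => Real.sqrt_nonneg x

theorem kmsNormSq_nonneg (σ X : Matrix n n ℂ) : 0 ≤ kmsNormSq σ X := by
  open scoped MatrixOrder in
  obtain ⟨B, hB⟩ := CStarAlgebra.nonneg_iff_eq_star_mul_self.mp (msqrt_nonneg σ)
  rw [star_eq_conjTranspose] at hB
  have htr : kmsInner σ X X = ((B * X * Bᴴ)ᴴ * (B * X * Bᴴ)).trace := by
    simp only [kmsInner, hB, conjTranspose_mul, conjTranspose_conjTranspose, mul_assoc]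
    rw [trace_mul_comm]
    simp only [mul_assoc]
  exact (Complex.nonneg_iff.mp (htr ▸ (posSemidef_conjTranspose_mul_self _).trace_nonneg)).1

theorem kmsNormSq_eq_of_kmsNorm_eq {σ X Y : Matrix n n ℂ} (h : kmsNorm σ X = kmsNorm σ Y) :
    kmsNormSq σ X = kmsNormSq σ Y :=
  (Real.sqrt_inj (kmsNormSq_nonneg σ X) (kmsNormSq_nonneg σ Y)).mp h

theorem kmsInner_conj_symm (σ X Y : Matrix n n ℂ) :
    kmsInner σ Y X = star (kmsInner σ X Y) := by
  have hS : (msqrt σ)ᴴ = msqrt σ := cfc_predicate Real.sqrt σ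
  rw [kmsInner, kmsInner, ← trace_conjTranspose]
  simp only [conjTranspose_mul, conjTranspose_conjTranspose, hS, ← mul_assoc]
  rw [trace_mul_comm, ← mul_assoc, ← mul_assoc, mul_assoc _ Yᴴ, trace_mul_comm, ← mul_assoc]

theorem re_kmsInner_comm (σ X Y : Matrix n n ℂ) :
    (kmsInner σ Y X).re = (kmsInner σ X Y).re := by
  rw [kmsInner_conj_symm, Complex.star_def, Complex.conj_re]

theorem kmsInner_sub_left (σ X₁ X₂ Y : Matrix n n ℂ) :
    kmsInner σ (X₁ - X₂) Y = kmsInner σ X₁ Y - kmsInner σ X₂ Y := by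
  simp [kmsInner, conjTranspose_sub, sub_mul, mul_sub]

theorem kmsInner_sub_right (σ X Y₁ Y₂ : Matrix n n ℂ) :
    kmsInner σ X (Y₁ - Y₂) = kmsInner σ X Y₁ - kmsInner σ X Y₂ := by
  simp [kmsInner, mul_sub]

theorem hasDerivAt_kmsNormSq (σ : Matrix n n ℂ) {W : ℝ → Matrix n n ℂ} {W' : Matrix n n ℂ}
    {t : ℝ} (hW : HasDerivAt W W' t) :
    HasDerivAt (fun s => kmsNormSq σ (W s)) (2 * (kmsInner σ (W t) W').re) t := by
  let reTrace : Matrix n n ℂ →L[ℝ] ℝ :=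
    Complex.reCLM.comp (LinearMap.toContinuousLinearMap (traceLinearMap n ℝ ℂ))
  have hprod := ((hW.star.const_mul (msqrt σ)).mul_const (msqrt σ)).mul hW
  refine (reTrace.hasFDerivAt.comp_hasDerivAt t hprod).congr_deriv ?_
  change (trace (_ + _ : Matrix n n ℂ)).re = _
  rw [trace_add, Complex.add_re]
  change (kmsInner σ W' (W t)).re + (kmsInner σ (W t) W').re = _
  rw [re_kmsInner_comm, two_mul]

theorem re_kmsInner_eq_zero_of_kmsNormSq_const {σ : Matrix n n ℂ} {u : ℝ → Matrix n n ℂ}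
    {u' : Matrix n n ℂ} {s : ℝ} (hu : HasDerivAt u u' s)
    (hconst : ∀ r ≥ s, kmsNormSq σ (u r) = kmsNormSq σ (u s)) :
    (kmsInner σ (u s) u').re = 0 := by
  have hconst' : HasDerivWithinAt (fun r => kmsNormSq σ (u r)) 0 (Ici s) s :=
    (hasDerivWithinAt_const s _ _).congr hconst (hconst s le_rfl)
  have := (uniqueDiffWithinAt_Ici s).eq_deriv _
    (hasDerivAt_kmsNormSq σ hu).hasDerivWithinAt hconst'
  linarith

end KMS

section Decay

variable {n : Type*} [Fintype n] [DecidableEq n] {σ : Matrix n n ℂ}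
  {L E : Matrix n n ℂ →ₗ[ℂ] Matrix n n ℂ}

theorem kmsInner_sub_proj_sub_proj (hE1 : ∀ X, E (E X) = E X)
    (hE2 : ∀ X Y, kmsInner σ (E X) Y = kmsInner σ X (E Y)) (hb : L ∘ₗ E = E ∘ₗ L)
    (Z : Matrix n n ℂ) :
    kmsInner σ (Z - E Z) (L Z - E (L Z)) = kmsInner σ Z (L Z) - kmsInner σ (E Z) (L (E Z)) := by
  have hEL : kmsInner σ Z (E (L Z)) = kmsInner σ (E Z) (L (E Z)) := by
    rw [← hE1 (L Z), ← hE2, ← LinearMap.comp_apply E L, ← hb, LinearMap.comp_apply]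
  rw [kmsInner_sub_left, kmsInner_sub_right, kmsInner_sub_right, hE2, hE2, hE1, hEL]
  ring

theorem kmsNormSq_sub_proj_le_of_poincare (hE1 : ∀ X, E (E X) = E X)
    (hE2 : ∀ X Y, kmsInner σ (E X) Y = kmsInner σ X (E Y)) (hb : L ∘ₗ E = E ∘ₗ L) {lam : ℝ}
    (hPI : ∀ X : Matrix n n ℂ, X.IsHermitian →
      lam * kmsNormSq σ (X - E X) ≤ -(kmsInner σ X (L X)).re)
    {Z : ℝ → Matrix n n ℂ} (hZ : ∀ s, HasDerivAt Z (L (Z s)) s)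
    (hherm : ∀ s, (Z s).IsHermitian)
    (hisom : ∀ s ≥ 0, (kmsInner σ (E (Z s)) (L (E (Z s)))).re = 0) {t : ℝ} (ht : 0 ≤ t) :
    kmsNormSq σ (Z t - E (Z t)) ≤ Real.exp (-2 * lam * t) * kmsNormSq σ (Z 0 - E (Z 0)) := by
  have hEZ : ∀ s, HasDerivAt (fun r => E (Z r)) (E (L (Z s))) s := fun s =>
    ((LinearMap.toContinuousLinearMap E).restrictScalars ℝ).hasFDerivAt.comp_hasDerivAt s (hZ s)
  have hvar : ∀ s, HasDerivAt (fun r => kmsNormSq σ (Z r - E (Z r)))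
      (2 * (kmsInner σ (Z s - E (Z s)) (L (Z s) - E (L (Z s)))).re) s := fun s =>
    hasDerivAt_kmsNormSq σ ((hZ s).sub (hEZ s))
  have hbound : ∀ s ∈ Ico 0 t, 2 * (kmsInner σ (Z s - E (Z s)) (L (Z s) - E (L (Z s)))).re
      ≤ -2 * lam * kmsNormSq σ (Z s - E (Z s)) := fun s hs => by
    rw [kmsInner_sub_proj_sub_proj hE1 hE2 hb, Complex.sub_re, hisom s hs.1]
    linarith [hPI _ (hherm s)]
  have := le_mul_exp_of_deriv_right_le_mul (fun s _ => (hvar s).continuousAt.continuousWithinAt)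
    (fun s _ => (hvar s).hasDerivWithinAt) hbound ht
  rwa [sub_zero, mul_comm] at this

end Decay

theorem poincare_implies_varDF_decay_general
    {n : Type*} [Fintype n] [DecidableEq n]
    (σ : Matrix n n ℂ)
    (L : Matrix n n ℂ →ₗ[ℂ] Matrix n n ℂ)
    (P : ℝ → Matrix n n ℂ →L[ℂ] Matrix n n ℂ)
    (hP : ∀ t : ℝ, P t = NormedSpace.exp (t • (LinearMap.toContinuousLinearMap L)))
    (E : Matrix n n ℂ →ₗ[ℂ] Matrix n n ℂ)
    (hE1 : ∀ X, E (E X) = E X)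
    (hE2 : ∀ X Y, kmsInner σ (E X) Y = kmsInner σ X (E Y))
    (ha : ∀ X, L Xᴴ = (L X)ᴴ)
    (hb : L ∘ₗ E = E ∘ₗ L)
    (hc : ∀ t : ℝ, 0 ≤ t → ∀ X, kmsNorm σ (P t (E X)) = kmsNorm σ (E X))
    (lam : ℝ)
    (hPI : ∀ X : Matrix n n ℂ, X.IsHermitian →
      lam * kmsNormSq σ (X - E X) ≤ -(kmsInner σ X (L X)).re) :
    ∀ X : Matrix n n ℂ, X.IsHermitian → ∀ t : ℝ, 0 ≤ t →
      kmsNormSq σ (P t X - E (P t X)) ≤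
        Real.exp (-2 * lam * t) * kmsNormSq σ (X - E X) := by
  intro X hX t ht
  obtain rfl : P = fun t => exp (t • LinearMap.toContinuousLinearMap L) := funext hP
  set T := LinearMap.toContinuousLinearMap L
  beta_reduce at hc
  have hflow : ∀ Y s, HasDerivAt (fun r => exp (r • T) Y) (L (exp (s • T) Y)) s :=
    hasDerivAt_exp_smul_apply T
  have hEP : ∀ s, E (exp (s • T) X) = exp (s • T) (E X) := fun s =>
    Commute.apply_exp_smul_apply (S := LinearMap.toContinuousLinearMap E)
      (ContinuousLinearMap.ext fun Y => (LinearMap.congr_fun hb Y).symm) s X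
  have hherm : ∀ s, (exp (s • T) X).IsHermitian := fun s =>
    (star_exp_smul_apply ha s X).trans (congrArg _ hX.eq)
  have hisom : ∀ s : ℝ, 0 ≤ s → (kmsInner σ (E (exp (s • T) X)) (L (E (exp (s • T) X)))).re = 0 :=
    fun s hs => by
    rw [hEP]
    refine re_kmsInner_eq_zero_of_kmsNormSq_const (u := fun r => exp (r • T) (E X))
      (hflow (E X) s) fun r hr => ?_
    rw [kmsNormSq_eq_of_kmsNorm_eq (hc r (hs.trans hr) X), kmsNormSq_eq_of_kmsNorm_eq (hc s hs X)]
  have key := kmsNormSq_sub_proj_le_of_poincare hE1 hE2 hb hPI (hflow X) hherm hisom ht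
  have h0 : exp ((0 : ℝ) • T) X = X := by
    rw [show (0 : ℝ) • T = 0 from zero_smul ℝ T, exp_zero, one_apply_eq_self]
  rwa [h0] at key

/-- **Theorem 2.6, first part.** The decoherence-free Poincaré inequality `PI_N(λ)`
implies exponential decay of the decoherence-free variance with rate `2λ`. -/
theorem poincare_implies_varDF_decay
    {n : Type*} [Fintype n] [DecidableEq n] [Nonempty n]
    (σ : Matrix n n ℂ) (hσ : σ.PosDef) (hσtr : Matrix.trace σ = 1)
    (L : Matrix n n ℂ →ₗ[ℂ] Matrix n n ℂ)
    (P : ℝ → Matrix n n ℂ →L[ℂ] Matrix n n ℂ)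
    (hP : ∀ t : ℝ, P t = NormedSpace.exp (t • (LinearMap.toContinuousLinearMap L)))
    (E : Matrix n n ℂ →ₗ[ℂ] Matrix n n ℂ)
    (hE1 : ∀ X, E (E X) = E X)
    (hE2 : ∀ X Y, kmsInner σ (E X) Y = kmsInner σ X (E Y))
    (ha : ∀ X, L Xᴴ = (L X)ᴴ)
    (hb : L ∘ₗ E = E ∘ₗ L)
    (hc : ∀ t : ℝ, 0 ≤ t → ∀ X, kmsNorm σ (P t (E X)) = kmsNorm σ (E X))
    (lam : ℝ) (hlam : 0 < lam)
    (hPI : ∀ X : Matrix n n ℂ, X.IsHermitian →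
      lam * kmsNormSq σ (X - E X) ≤ -(kmsInner σ X (L X)).re) :
    ∀ X : Matrix n n ℂ, X.IsHermitian → ∀ t : ℝ, 0 ≤ t →
      kmsNormSq σ (P t X - E (P t X)) ≤
        Real.exp (-2 * lam * t) * kmsNormSq σ (X - E X) :=
  poincare_implies_varDF_decay_general σ L P hP E hE1 hE2 ha hb hc lam hPI
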